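/- Let {X_i}_{i∈I} be a family of Banach spaces each having property (μ^s), and let 1 < p < ∞. Then (⊕_{i∈I} X_i)_{ℓᵖ} has property (μ^s). -/

import Mathlib

open Filter Topology MeasureTheory Pointwise ENNReal

noncomputable section

/-- A subset of a real normed space is *weakly compact* if it is compact in the weak topology. -/
def WeaklyCompact {X : Type*} [NormedAddCommGroup X] [NormedSpace ℝ X] (W : Set X) : Prop :=
  IsCompact (toWeakSpace ℝ X '' W)

/-- A sequence in the dual is weak*-null. -/
def WeakStarNull {X : Type*} [NormedAddCommGroup X] [NormedSpace ℝ X]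
    (f : ℕ → StrongDual ℝ X) : Prop :=
  ∀ x : X, Tendsto (fun n => f n x) atTop (𝓝 0)

/-- Convergence to `0` in the Mackey topology `μ(X*,X)`: uniform convergence to `0`
on every weakly compact subset of `X`. -/
def MackeyNull {X : Type*} [NormedAddCommGroup X] [NormedSpace ℝ X]
    (f : ℕ → StrongDual ℝ X) : Prop :=
  ∀ W : Set X, WeaklyCompact W → TendstoUniformlyOn (fun n x => f n x) 0 atTop W

/-- The sequence of Cesàro (arithmetic) means of `f` converges to `0` in the Mackey
topology `μ(X*,X)`. -/
def CesaroMackeyNull {X : Type*} [NormedAddCommGroup X] [NormedSpace ℝ X]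
    (f : ℕ → StrongDual ℝ X) : Prop :=
  ∀ W : Set X, WeaklyCompact W →
    TendstoUniformlyOn (fun N : ℕ => fun x => (N : ℝ)⁻¹ • ∑ n ∈ Finset.range N, f n x) 0 atTop W

/-- Property (μ^s): every weak*-null sequence in `X*` admits a subsequence all of whose
further subsequences are Cesàro convergent to `0` with respect to the Mackey topology. -/
def PropMuS (X : Type*) [NormedAddCommGroup X] [NormedSpace ℝ X] : Prop :=
  ∀ f : ℕ → StrongDual ℝ X, WeakStarNull f →
    ∃ φ : ℕ → ℕ, StrictMono φ ∧ ∀ ψ : ℕ → ℕ, StrictMono ψ →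
      CesaroMackeyNull (fun k => f (φ (ψ k)))

/-!
A functional `f` on `(⨁ Eᵢ)_{ℓᵖ}` is determined by its components `fᵢ = f ∘ ιᵢ ∈ Eᵢ*`, and
`(‖fᵢ‖)ᵢ ∈ ℓ^q` with norm at most `‖f‖`. Given a weak*-null sequence `(fₙ)`, only countably many
coordinates carry a nonzero component, so a diagonal argument yields a subsequence along which,
for every `i`, the norms `‖fₙ,ᵢ‖` converge to some `αᵢ` and every further subsequence of `(fₙ,ᵢ)ₙ`
is Cesàro–Mackey null in `Eᵢ*`. The vectors `(‖fₙ,ᵢ‖)ᵢ` are bounded in `ℓ^q` and converge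
coordinatewise to `α ∈ ℓ^q`; by a gliding hump they are, after passing to a subsequence, small
perturbations of vectors with disjoint supports, whose Cesàro means have norm `O(N^{1/q - 1})`.
So along this subsequence, and along each of its subsequences, the Cesàro means of these vectors
converge to `α` in `ℓ^q`.

On a weakly compact set `W`, the Cesàro mean of `fₙ` at `x` splits into its components on a
finite set `s` of coordinates, which are uniformly small by (μ^s) of the `Eᵢ`, and a tail which by
Hölder's inequality is at most `(‖mean - α‖_q + ‖α - α|ₛ‖_q) · sup_W ‖x‖`.
-/

open scoped lp

section

variable {X Y : Type*} [NormedAddCommGroup X] [NormedSpace ℝ X]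
  [NormedAddCommGroup Y] [NormedSpace ℝ Y]

theorem WeaklyCompact.exists_norm_le {W : Set X} (hW : WeaklyCompact W) :
    ∃ M, ∀ x ∈ W, ‖x‖ ≤ M := by
  have hbdd : ∀ g : StrongDual ℝ X, ∃ C, ∀ x : W,
      ‖NormedSpace.inclusionInDoubleDual ℝ X x g‖ ≤ C := by
    intro g
    obtain ⟨C, hC⟩ := (IsCompact.image hW (WeakBilin.eval_continuous _ g)).isBounded.exists_norm_le
    exact ⟨C, fun x => hC _ ⟨toWeakSpace ℝ X x, Set.mem_image_of_mem _ x.2, rfl⟩⟩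
  obtain ⟨M, hM⟩ := banach_steinhaus hbdd
  exact ⟨M, fun x hx => (NormedSpace.inclusionInDoubleDualLi ℝ).norm_map x ▸ hM ⟨x, hx⟩⟩

theorem WeaklyCompact.image {W : Set X} (hW : WeaklyCompact W) (T : X →L[ℝ] Y) :
    WeaklyCompact (T '' W) := by
  have : toWeakSpace ℝ Y '' (T '' W) = WeakSpace.map T '' (toWeakSpace ℝ X '' W) := by
    simp only [Set.image_image]
    rfl
  rw [WeaklyCompact, this]
  exact IsCompact.image hW (WeakSpace.map T).continuous

theorem WeakStarNull.exists_norm_le [CompleteSpace X] {f : ℕ → StrongDual ℝ X}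
    (hf : WeakStarNull f) : ∃ C, ∀ n, ‖f n‖ ≤ C :=
  banach_steinhaus fun x => by
    obtain ⟨C, hC⟩ := (hf x).norm.bddAbove_range
    exact ⟨C, fun n => hC ⟨n, rfl⟩⟩

theorem cesaroMackeyNull_zero : CesaroMackeyNull (0 : ℕ → StrongDual ℝ X) := by
  intro W _
  simpa [Pi.zero_def] using tendsto_const_nhds.tendstoUniformlyOn_const (p := atTop (α := ℕ)) W

theorem CesaroMackeyNull.add {f g : ℕ → StrongDual ℝ X} (hf : CesaroMackeyNull f)
    (hg : CesaroMackeyNull g) : CesaroMackeyNull (f + g) := by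
  intro W hW
  convert (hf W hW).add (hg W hW) using 1
  · ext N x
    simp [Finset.sum_add_distrib, mul_add]
  · simp

theorem CesaroMackeyNull.finsetSum {ι : Type*} (s : Finset ι) {f : ι → ℕ → StrongDual ℝ X}
    (hf : ∀ i ∈ s, CesaroMackeyNull (f i)) : CesaroMackeyNull (∑ i ∈ s, f i) :=
  Finset.sum_induction _ _ (fun _ _ => CesaroMackeyNull.add) cesaroMackeyNull_zero hf

theorem CesaroMackeyNull.comp {f : ℕ → StrongDual ℝ X} (hf : CesaroMackeyNull f) (T : Y →L[ℝ] X) :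
    CesaroMackeyNull fun k => (f k).comp T := by
  intro W hW
  exact ((hf _ (hW.image T)).comp T).mono (Set.subset_preimage_image T W)


theorem CesaroMackeyNull.of_succ {f : ℕ → StrongDual ℝ X}
    (hf : CesaroMackeyNull fun k => f (k + 1)) : CesaroMackeyNull f := by
  intro W hW
  obtain ⟨M, hM⟩ := hW.exists_norm_le
  have hshift := Metric.tendstoUniformlyOn_iff.1 (hf W hW)
  have hhead : Tendsto (fun n : ℕ => (n : ℝ)⁻¹ * (‖f 0‖ * M)) atTop (𝓝 0) := by
    simpa using tendsto_inv_atTop_nhds_zero_nat.mul_const (‖f 0‖ * M)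
  rw [Metric.tendstoUniformlyOn_iff]
  intro ε hε
  obtain ⟨n₀, hn₀⟩ := eventually_atTop.1 <| (hshift _ (half_pos hε)).and <|
    (hhead.eventually (gt_mem_nhds (half_pos hε))).and (eventually_ge_atTop 1)
  filter_upwards [eventually_gt_atTop n₀] with N hN x hx
  obtain ⟨n, rfl⟩ : ∃ n, N = n + 1 := ⟨N - 1, by omega⟩
  obtain ⟨hmean, hfirst, hn⟩ := hn₀ n (by omega)
  have hmean' := hmean x hx
  have hn' : (0 : ℝ) < n := by exact_mod_cast hn
  have hinv : ((n + 1 : ℕ) : ℝ)⁻¹ ≤ (n : ℝ)⁻¹ := by gcongr; simp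
  have hf0 : |f 0 x| ≤ ‖f 0‖ * M :=
    ((f 0).le_opNorm x).trans (mul_le_mul_of_nonneg_left (hM x hx) (norm_nonneg _))
  simp only [Pi.zero_apply, Real.dist_eq, zero_sub, abs_neg, smul_eq_mul, abs_mul,
    abs_inv, Nat.abs_cast] at hmean' hfirst ⊢
  rw [Finset.sum_range_succ']
  calc ((n + 1 : ℕ) : ℝ)⁻¹ * |∑ k ∈ Finset.range n, f (k + 1) x + f 0 x|
      ≤ (n : ℝ)⁻¹ * |∑ k ∈ Finset.range n, f (k + 1) x| + (n : ℝ)⁻¹ * (‖f 0‖ * M) := by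
        refine (mul_le_mul_of_nonneg_left (abs_add_le _ _) (by positivity)).trans ?_
        rw [mul_add]
        gcongr
    _ < ε / 2 + ε / 2 := add_lt_add hmean' hfirst
    _ = ε := add_halves ε

theorem CesaroMackeyNull.of_add (K : ℕ) {f : ℕ → StrongDual ℝ X}
    (hf : CesaroMackeyNull fun k => f (k + K)) : CesaroMackeyNull f := by
  induction K with
  | zero => exact hf
  | succ K ih => exact ih (.of_succ (by simpa only [add_right_comm _ 1 K, add_assoc] using hf))

theorem ContinuousLinearMap.exists_seq_norm_le_one_tendsto_norm (g : StrongDual ℝ X) :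
    ∃ y : ℕ → X, (∀ n, ‖y n‖ ≤ 1) ∧ Tendsto (fun n => g (y n)) atTop (𝓝 ‖g‖) := by
  have : ∀ n : ℕ, ∃ y : X, ‖y‖ ≤ 1 ∧ ‖g‖ - 1 / (n + 1) < g y := by
    intro n
    obtain ⟨y, hy, hgy⟩ := g.exists_lt_apply_of_lt_opNorm
      (sub_lt_self ‖g‖ (Nat.one_div_pos_of_nat (n := n)))
    rcases le_or_gt 0 (g y) with h | h
    · exact ⟨y, hy.le, by rwa [Real.norm_of_nonneg h] at hgy⟩
    · exact ⟨-y, by simpa using hy.le, by rwa [map_neg, ← Real.norm_of_nonpos h.le]⟩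
  choose y hy1 hy using this
  refine ⟨y, hy1, tendsto_of_tendsto_of_tendsto_of_le_of_le ?_ tendsto_const_nhds
    (fun n => (hy n).le) fun n => ?_⟩
  · simpa using tendsto_const_nhds.sub (tendsto_one_div_add_atTop_nhds_zero_nat (𝕜 := ℝ))
  · exact (le_abs_self _).trans ((g.le_opNorm _).trans
      (mul_le_of_le_one_right (norm_nonneg _) (hy1 n)))

end

theorem StrictMono.exists_strictMono_eq_comp {s t : ℕ → ℕ} (hs : StrictMono s) (ht : StrictMono t)
    (h : ∀ n, t n ∈ Set.range s) : ∃ v, StrictMono v ∧ t = s ∘ v := by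
  choose v hv using h
  refine ⟨v, fun a b hab => hs.lt_iff_lt.1 ?_, funext fun n => (hv n).symm⟩
  rw [hv a, hv b]
  exact ht hab

theorem exists_strictMono_forall_comp_strictMono {ι : Type*} [Countable ι]
    (P : ι → (ℕ → ℕ) → Prop)
    (hP : ∀ i s, StrictMono s →
      ∃ φ : ℕ → ℕ, StrictMono φ ∧ ∀ ψ : ℕ → ℕ, StrictMono ψ → P i (s ∘ φ ∘ ψ))
    (hshift : ∀ i s K, P i (fun k => s (k + K)) → P i s) :
    ∃ d : ℕ → ℕ, StrictMono d ∧ ∀ i ψ, StrictMono ψ → P i (d ∘ ψ) := by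
  rcases isEmpty_or_nonempty ι with hι | hι
  · exact ⟨id, strictMono_id, fun i => isEmptyElim i⟩
  obtain ⟨e, he⟩ := exists_surjective_nat ι
  choose φ hφ hPφ using hP
  -- `S (m + 1)` refines `S m` so that all its subsequences satisfy `P (e m)`, and the diagonal
  -- `d` is, from index `m` on, a subsequence of `S (m + 1)`.
  let S : ℕ → {s : ℕ → ℕ // StrictMono s} := fun m => Nat.rec ⟨id, strictMono_id⟩
    (fun m s => ⟨s.1 ∘ φ (e m) s.1 s.2, s.2.comp (hφ _ _ _)⟩) m
  have hS : ∀ m n, m ≤ n → ∀ k, (S n).1 k ∈ Set.range (S m).1 := by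
    intro m n hmn
    induction n, hmn using Nat.le_induction with
    | base => exact fun k => ⟨k, rfl⟩
    | succ n _ ih => exact fun k => ih _
  let d : ℕ → ℕ := fun k => (S (k + 1)).1 k
  have hd : StrictMono d := strictMono_nat_of_lt_succ fun k =>
    (S (k + 1)).2.lt_iff_lt.2 <| (Nat.lt_succ_self k).trans_le ((hφ _ _ _).id_le _)
  refine ⟨d, hd, fun i ψ hψ => ?_⟩
  obtain ⟨m, rfl⟩ := he i
  obtain ⟨v, hv, htail⟩ := (S (m + 1)).2.exists_strictMono_eq_comp
    (t := fun j => d (ψ (j + m))) (fun a b hab => hd (hψ (by omega)))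
    fun j => hS (m + 1) (ψ (j + m) + 1)
      (Nat.succ_le_succ ((Nat.le_add_left m j).trans (hψ.id_le _))) _
  refine hshift _ _ m ?_
  change P (e m) (fun j => d (ψ (j + m)))
  rw [htail]
  exact hPφ (e m) (S m).1 (S m).2 v hv

theorem exists_strictMono_forall_rel_succ {r : ℕ → ℕ → Prop} (h : ∀ n, ∀ᶠ k in atTop, r n k) :
    ∃ φ : ℕ → ℕ, StrictMono φ ∧ ∀ m, r (φ m) (φ (m + 1)) := by
  choose next hnext using fun n => ((h n).and (eventually_gt_atTop n)).exists
  refine ⟨fun m => next^[m] 0, strictMono_nat_of_lt_succ fun m => ?_, fun m => ?_⟩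
  · simpa only [Function.iterate_succ_apply'] using (hnext _).2
  · simpa only [Function.iterate_succ_apply'] using (hnext _).1

namespace lp

variable {I : Type*} {E : I → Type*} [∀ i, NormedAddCommGroup (E i)] {p q : ℝ≥0∞}

theorem norm_sum_rpow_of_pairwise {ι : Type*} (hp : 0 < p.toReal) (b : ι → lp E p) (s : Finset ι)
    (hb : (s : Set ι).Pairwise fun k l => ∀ i, b k i = 0 ∨ b l i = 0) :
    ‖∑ k ∈ s, b k‖ ^ p.toReal = ∑ k ∈ s, ‖b k‖ ^ p.toReal := by
  have hpt : ∀ i, ‖(∑ k ∈ s, b k) i‖ ^ p.toReal = ∑ k ∈ s, ‖b k i‖ ^ p.toReal := by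
    intro i
    rw [lp.coeFn_sum, Finset.sum_apply]
    by_cases h : ∃ k ∈ s, b k i ≠ 0
    · obtain ⟨k, hk, hki⟩ := h
      have hzero : ∀ l ∈ s, l ≠ k → b l i = 0 := fun l hl hlk =>
        (hb hk hl hlk.symm i).resolve_left hki
      rw [Finset.sum_eq_single_of_mem k hk hzero, Finset.sum_eq_single_of_mem k hk
        fun l hl hlk => by rw [hzero l hl hlk, _root_.norm_zero, Real.zero_rpow hp.ne']]
    · simp only [not_exists, not_and, not_not] at h
      rw [Finset.sum_eq_zero h, Finset.sum_eq_zero fun k hk => by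
        rw [h k hk, _root_.norm_zero, Real.zero_rpow hp.ne'], _root_.norm_zero,
        Real.zero_rpow hp.ne']
  refine (lp.hasSum_norm hp _).unique ?_
  simp_rw [hpt]
  exact hasSum_sum fun k _ => lp.hasSum_norm hp (b k)

variable [∀ i, NormedSpace ℝ (E i)] [Fact (1 ≤ p)]

theorem tendsto_cesaro_of_pairwise (hp : 1 < p.toReal) {b : ℕ → lp E p} {C : ℝ}
    (hC : ∀ k, ‖b k‖ ≤ C) (hb : Pairwise fun k l => ∀ i, b k i = 0 ∨ b l i = 0) :
    Tendsto (fun N : ℕ => (N : ℝ)⁻¹ • ∑ k ∈ Finset.range N, b k) atTop (𝓝 0) := by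
  have hp0 : 0 < p.toReal := zero_lt_one.trans hp
  have hC0 : 0 ≤ C := (norm_nonneg _).trans (hC 0)
  have hexp : p.toReal⁻¹ - 1 < 0 := sub_neg.2 (inv_lt_one_of_one_lt₀ hp)
  refine squeeze_zero_norm (a := fun N : ℕ => C * (N : ℝ) ^ (p.toReal⁻¹ - 1)) (fun N => ?_) ?_
  · rcases Nat.eq_zero_or_pos N with rfl | hN
    · simp [Real.zero_rpow hexp.ne]
    have hN' : (0 : ℝ) < N := by exact_mod_cast hN
    have hsum : ‖∑ k ∈ Finset.range N, b k‖ ≤ C * (N : ℝ) ^ p.toReal⁻¹ := by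
      rw [← Real.rpow_le_rpow_iff (norm_nonneg _) (by positivity) hp0,
        norm_sum_rpow_of_pairwise hp0 _ _ fun k _ l _ hkl => hb hkl,
        Real.mul_rpow hC0 (by positivity), Real.rpow_inv_rpow hN'.le hp0.ne']
      calc ∑ k ∈ Finset.range N, ‖b k‖ ^ p.toReal
          ≤ ∑ _k ∈ Finset.range N, C ^ p.toReal :=
            Finset.sum_le_sum fun k _ => Real.rpow_le_rpow (norm_nonneg _) (hC k) hp0.le
        _ = C ^ p.toReal * N := by simp [mul_comm]
    rw [norm_smul, norm_inv, Real.norm_natCast, Real.rpow_sub hN', Real.rpow_one, mul_div_assoc',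
      inv_mul_eq_div]
    exact div_le_div_of_nonneg_right hsum hN'.le
  · simpa using ((tendsto_rpow_neg_atTop (neg_pos.2 hexp)).comp
      tendsto_natCast_atTop_atTop).const_mul C

section Restrict

variable [DecidableEq I]

def restrictFinset (s : Finset I) : lp E p →L[ℝ] lp E p :=
  ∑ i ∈ s, (lp.singleContinuousLinearMap ℝ E p i).comp (lp.evalCLM ℝ E p i)

theorem restrictFinset_apply (s : Finset I) (x : lp E p) :
    restrictFinset s x = ∑ i ∈ s, lp.single p i (x i) := by
  simp [restrictFinset]
  rfl

theorem coeFn_restrictFinset (s : Finset I) (x : lp E p) (i : I) :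
    restrictFinset s x i = if i ∈ s then x i else 0 := by
  rw [restrictFinset_apply, lp.coeFn_sum, Finset.sum_apply]
  simp only [lp.coeFn_single, Finset.sum_pi_single]

theorem coeFn_sub_restrictFinset (s : Finset I) (x : lp E p) (i : I) :
    (x - restrictFinset s x) i = if i ∈ s then 0 else x i := by
  rw [lp.coeFn_sub, Pi.sub_apply, coeFn_restrictFinset]
  split_ifs <;> simp

theorem restrictFinset_apply_eq_zero_or {s t : Finset I} (h : Disjoint s t) (x y : lp E p)
    (i : I) : restrictFinset s x i = 0 ∨ restrictFinset t y i = 0 := by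
  simp only [coeFn_restrictFinset]
  by_cases hi : i ∈ s
  · simp [Finset.disjoint_left.1 h hi]
  · simp [hi]

theorem restrictFinset_sdiff {s t : Finset I} (h : s ⊆ t) :
    restrictFinset (E := E) (p := p) (t \ s) = restrictFinset t - restrictFinset s :=
  Finset.sum_sdiff_eq_sub h

theorem norm_restrictFinset_le (s : Finset I) (x : lp E p) : ‖restrictFinset s x‖ ≤ ‖x‖ :=
  lp.norm_mono (zero_lt_one.trans_le Fact.out).ne' fun i => by
    rw [coeFn_restrictFinset]; split_ifs <;> simp

theorem norm_sub_restrictFinset_le (s : Finset I) (x : lp E p) :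
    ‖x - restrictFinset s x‖ ≤ ‖x‖ :=
  lp.norm_mono (zero_lt_one.trans_le Fact.out).ne' fun i => by
    rw [coeFn_sub_restrictFinset]; split_ifs <;> simp

theorem norm_sub_restrictFinset_le_of_forall_norm_le (s : Finset I) {x y : lp E p}
    (h : ∀ i, ‖x i‖ ≤ ‖y i‖) (z : lp E p) :
    ‖x - restrictFinset s x‖ ≤ ‖y - z‖ + ‖z - restrictFinset s z‖ :=
  calc ‖x - restrictFinset s x‖ ≤ ‖y - restrictFinset s y‖ :=
        lp.norm_mono (zero_lt_one.trans_le Fact.out).ne' fun i => by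
          rw [coeFn_sub_restrictFinset, coeFn_sub_restrictFinset]; split_ifs <;> simp [h i]
    _ = ‖(y - z) - restrictFinset s (y - z) + (z - restrictFinset s z)‖ := by
        rw [map_sub]; abel_nf
    _ ≤ ‖y - z‖ + ‖z - restrictFinset s z‖ :=
        (norm_add_le _ _).trans (add_le_add_left (norm_sub_restrictFinset_le s _) _)

theorem tendsto_restrictFinset (hp : p ≠ ⊤) (x : lp E p) :
    Tendsto (fun s => restrictFinset s x) atTop (𝓝 x) := by
  simp only [restrictFinset_apply]
  exact lp.hasSum_single hp x

theorem tendsto_restrictFinset_of_tendsto_apply {u : ℕ → lp E p} {x : lp E p}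
    (hu : ∀ i, Tendsto (fun k => u k i) atTop (𝓝 (x i))) (s : Finset I) :
    Tendsto (fun k => restrictFinset s (u k)) atTop (𝓝 (restrictFinset s x)) := by
  simp only [restrictFinset_apply]
  exact tendsto_finsetSum s fun i _ =>
    ((lp.singleContinuousLinearMap ℝ E p i).continuous.tendsto _).comp (hu i)

end Restrict

theorem exists_subseq_near_pairwise_disjoint (hp : p ≠ ⊤) {u : ℕ → lp E p}
    (hu : ∀ i, Tendsto (fun k => u k i) atTop (𝓝 0)) :
    ∃ χ : ℕ → ℕ, StrictMono χ ∧ ∃ b : ℕ → lp E p, (∀ k, ‖b k‖ ≤ ‖u (χ k)‖) ∧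
      (Pairwise fun k l => ∀ i, b k i = 0 ∨ b l i = 0) ∧
      Tendsto (fun k => u (χ k) - b k) atTop (𝓝 0) := by
  classical
  have hG : ∀ n : ℕ, ∃ G : Finset I, ∀ s, G ⊆ s → ‖u n - restrictFinset s (u n)‖ < 1 / (n + 1) :=
    fun n => by
      obtain ⟨G, hG⟩ := eventually_atTop.1 <|
        Metric.tendsto_nhds.1 (tendsto_restrictFinset hp (u n)) _ Nat.one_div_pos_of_nat
      exact ⟨G, fun s hs => by simpa [dist_eq_norm'] using hG s hs⟩
  choose G hG using hG
  let H : ℕ → Finset I := fun n => (Finset.range (n + 1)).biUnion G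
  have hH : Monotone H := fun m n hmn =>
    Finset.biUnion_subset_biUnion_of_subset_left _ (Finset.range_subset_range.2 (by omega))
  have htail : ∀ n, ‖u n - restrictFinset (H n) (u n)‖ < 1 / (n + 1) := fun n =>
    hG n _ (Finset.subset_biUnion_of_mem G (Finset.self_mem_range_succ n))
  have hhead : ∀ n, ∀ᶠ k in atTop, ‖restrictFinset (H n) (u k)‖ < 1 / (n + 1) := fun n => by
    have := (tendsto_restrictFinset_of_tendsto_apply (x := 0) hu (H n)).norm
    simp only [map_zero, norm_zero] at this
    exact this.eventually (gt_mem_nhds Nat.one_div_pos_of_nat)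
  -- `u (χ (m + 1))` is small both on `H (χ m)` and off `H (χ (m + 1))`, so it is close to
  -- its piece on the ring `H (χ (m + 1)) \ H (χ m)`; these rings are pairwise disjoint.
  obtain ⟨χ, hχ, hχH⟩ := exists_strictMono_forall_rel_succ hhead
  have hχ_le : ∀ m, (1 : ℝ) / (χ m + 1) ≤ 1 / (m + 1) := fun m =>
    Nat.one_div_le_one_div (hχ.id_le m)
  have hring : ∀ m, disjointed (H ∘ χ) (m + 1) = H (χ (m + 1)) \ H (χ m) := fun m =>
    (hH.comp hχ.monotone).disjointed_succ (not_isMax m)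
  refine ⟨fun m => χ (m + 1), hχ.comp (strictMono_id.add_const 1),
    fun m => restrictFinset (disjointed (H ∘ χ) (m + 1)) (u (χ (m + 1))),
    fun m => norm_restrictFinset_le _ _, fun k l hkl =>
      restrictFinset_apply_eq_zero_or (disjoint_disjointed _ (by simpa using hkl)) _ _, ?_⟩
  have hbound : Tendsto (fun m : ℕ => 1 / ((m : ℝ) + 1) + 1 / ((m : ℝ) + 1)) atTop (𝓝 0) := by
    simpa using (tendsto_one_div_add_atTop_nhds_zero_nat (𝕜 := ℝ)).add
      (tendsto_one_div_add_atTop_nhds_zero_nat (𝕜 := ℝ))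
  refine squeeze_zero_norm (fun m => ?_) hbound
  dsimp only
  rw [hring, restrictFinset_sdiff (hH (hχ.monotone (Nat.le_add_right m 1))), sub_apply,
    sub_sub_eq_add_sub, add_sub_right_comm]
  refine (norm_add_le _ _).trans (add_le_add ?_ ?_)
  · exact (htail _).le.trans ((hχ_le _).trans (Nat.one_div_le_one_div (Nat.le_succ m)))
  · exact (hχH m).le.trans (hχ_le m)

theorem exists_subseq_forall_tendsto_cesaro (hp : 1 < p.toReal) {u : ℕ → lp E p} {C : ℝ}
    (hC : ∀ k, ‖u k‖ ≤ C) {α : lp E p} (hu : ∀ i, Tendsto (fun k => u k i) atTop (𝓝 (α i))) :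
    ∃ χ : ℕ → ℕ, StrictMono χ ∧ ∀ ψ : ℕ → ℕ, StrictMono ψ →
      Tendsto (fun N : ℕ => (N : ℝ)⁻¹ • ∑ k ∈ Finset.range N, u (χ (ψ k))) atTop (𝓝 α) := by
  have hp' : p ≠ ⊤ := (ENNReal.toReal_ne_zero.1 (zero_lt_one.trans hp).ne').2
  obtain ⟨χ, hχ, b, hbu, hb, hub⟩ :=
    exists_subseq_near_pairwise_disjoint hp' (u := fun k => u k - α) fun i => by
      simpa using (hu i).sub_const (α i)
  refine ⟨χ, hχ, fun ψ hψ => ?_⟩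
  have hblocks := tendsto_cesaro_of_pairwise hp (b := b ∘ ψ) (C := C + ‖α‖)
    (fun k => (hbu _).trans ((norm_sub_le _ _).trans (by gcongr; exact hC _)))
    (hb.comp_of_injective hψ.injective)
  have hrest := (hub.comp hψ.tendsto_atTop).cesaro_smul
  have hconst := (tendsto_const_nhds (x := α)).cesaro_smul
  convert (hblocks.add hrest).add hconst using 1
  · ext1 N
    simp only [Function.comp_apply, ← smul_add, ← Finset.sum_add_distrib]
    congr 1
    exact Finset.sum_congr rfl fun k _ => by abel
  · simp

section Dual

variable [DecidableEq I]

def dualComponent (f : StrongDual ℝ (lp E p)) (i : I) : StrongDual ℝ (E i) :=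
  f.comp (lp.singleContinuousLinearMap ℝ E p i)

@[simp]
theorem dualComponent_apply (f : StrongDual ℝ (lp E p)) (i : I) (y : E i) :
    dualComponent f i y = f (lp.single p i y) :=
  rfl

theorem sum_mul_norm_dualComponent_le (hp : p ≠ ⊤) (f : StrongDual ℝ (lp E p)) (s : Finset I)
    {t : I → ℝ} (ht0 : ∀ i, 0 ≤ t i) (ht : ∑ i ∈ s, t i ^ p.toReal ≤ 1) :
    ∑ i ∈ s, t i * ‖dualComponent f i‖ ≤ ‖f‖ := by
  have hp0 : 0 < p.toReal := ENNReal.toReal_pos (zero_lt_one.trans_le Fact.out).ne' hp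
  choose y hy1 hy using fun i => (dualComponent f i).exists_seq_norm_le_one_tendsto_norm
  refine le_of_tendsto' (tendsto_finsetSum s fun i _ => (hy i).const_mul (t i)) fun n => ?_
  set x : lp E p := ∑ i ∈ s, lp.single p i (t i • y i n)
  have hx : ‖x‖ ≤ 1 := by
    refine le_of_not_gt fun h => (Real.one_lt_rpow h hp0).not_ge ?_
    rw [lp.norm_sum_single hp0]
    refine le_trans (Finset.sum_le_sum fun i _ => ?_) ht
    rw [norm_smul, Real.norm_of_nonneg (ht0 i)]
    exact Real.rpow_le_rpow (mul_nonneg (ht0 i) (norm_nonneg _))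
      (mul_le_of_le_one_right (ht0 i) (hy1 i n)) hp0.le
  calc ∑ i ∈ s, t i * dualComponent f i (y i n) = f x := by simp [x, lp.single_smul]
    _ ≤ ‖f‖ * ‖x‖ := (le_abs_self _).trans (f.le_opNorm x)
    _ ≤ ‖f‖ := mul_le_of_le_one_right (norm_nonneg _) hx

theorem sum_norm_dualComponent_rpow_le {r : ℝ} (hpr : p.toReal.HolderConjugate r)
    (f : StrongDual ℝ (lp E p)) (s : Finset I) :
    ∑ i ∈ s, ‖dualComponent f i‖ ^ r ≤ ‖f‖ ^ r := by
  have hp : p ≠ ⊤ := (ENNReal.toReal_ne_zero.1 hpr.pos.ne').2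
  obtain ⟨t, ht, heq⟩ := (NNReal.isGreatest_Lp s (fun i => ‖dualComponent f i‖₊) hpr.symm).1
  have hS : 0 ≤ ∑ i ∈ s, ‖dualComponent f i‖ ^ r := by positivity
  have hroot : (∑ i ∈ s, ‖dualComponent f i‖ ^ r) ^ (1 / r) ≤ ‖f‖ := by
    have := congrArg NNReal.toReal heq
    push_cast at this
    rw [← this]
    simpa only [mul_comm] using sum_mul_norm_dualComponent_le hp f s (t := fun i => t i)
      (fun i => (t i).2) (by exact_mod_cast ht)
  calc ∑ i ∈ s, ‖dualComponent f i‖ ^ r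
      = ((∑ i ∈ s, ‖dualComponent f i‖ ^ r) ^ (1 / r)) ^ r := by
        rw [← Real.rpow_mul hS, one_div_mul_cancel hpr.symm.pos.ne', Real.rpow_one]
    _ ≤ ‖f‖ ^ r := Real.rpow_le_rpow (by positivity) hroot hpr.symm.nonneg

def dualComponentNorms (hpq : p.toReal.HolderConjugate q.toReal) (f : StrongDual ℝ (lp E p)) :
    ℓ^q(I, ℝ) :=
  ⟨fun i => ‖dualComponent f i‖, memℓp_gen' fun s => by
    simpa only [norm_norm] using sum_norm_dualComponent_rpow_le hpq f s⟩

@[simp]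
theorem coeFn_dualComponentNorms (hpq : p.toReal.HolderConjugate q.toReal)
    (f : StrongDual ℝ (lp E p)) (i : I) : dualComponentNorms hpq f i = ‖dualComponent f i‖ :=
  rfl

theorem norm_dualComponentNorms_le (hpq : p.toReal.HolderConjugate q.toReal)
    (f : StrongDual ℝ (lp E p)) : ‖dualComponentNorms hpq f‖ ≤ ‖f‖ :=
  lp.norm_le_of_forall_sum_le hpq.symm.pos (norm_nonneg f) fun s => by
    simpa only [coeFn_dualComponentNorms, norm_norm] using sum_norm_dualComponent_rpow_le hpq f s

theorem countable_support_dualComponentNorms (hpq : p.toReal.HolderConjugate q.toReal)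
    (f : StrongDual ℝ (lp E p)) : {i | dualComponent f i ≠ 0}.Countable := by
  refine (((lp.memℓp (dualComponentNorms hpq f)).summable hpq.symm.pos).countable_support).mono
    fun i hi => ?_
  simp only [Function.mem_support, coeFn_dualComponentNorms, norm_norm]
  exact (Real.rpow_pos_of_pos (norm_pos_iff.2 hi) _).ne'

theorem exists_subseq_dualComponent (hpq : p.toReal.HolderConjugate q.toReal)
    (h : ∀ i, PropMuS (E i)) {f : ℕ → StrongDual ℝ (lp E p)} (hf : WeakStarNull f) {C : ℝ}
    (hC : ∀ n, ‖f n‖ ≤ C) :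
    ∃ d : ℕ → ℕ, StrictMono d ∧
      (∀ i, ∃ a, Tendsto (fun k => ‖dualComponent (f (d k)) i‖) atTop (𝓝 a)) ∧
      ∀ i ψ, StrictMono ψ → CesaroMackeyNull fun k => dualComponent (f (d (ψ k))) i := by
  have hq0 : q ≠ 0 := (ENNReal.toReal_ne_zero.1 hpq.symm.pos.ne').1
  have hnorm : ∀ n i, ‖dualComponent (f n) i‖ ≤ C := fun n i => by
    simpa using ((lp.norm_apply_le_norm hq0 _ i).trans (norm_dualComponentNorms_le hpq _)).trans
      (hC n)
  let J := ⋃ n, {i | dualComponent (f n) i ≠ 0}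
  have : Countable J :=
    (Set.countable_iUnion fun n => countable_support_dualComponentNorms hpq (f n)).to_subtype
  obtain ⟨d, hd, hdP⟩ := exists_strictMono_forall_comp_strictMono (ι := J)
    (fun i s => (∃ a, Tendsto (fun k => ‖dualComponent (f (s k)) i‖) atTop (𝓝 a)) ∧
      CesaroMackeyNull fun k => dualComponent (f (s k)) i)
    (fun i s hs => by
      obtain ⟨a, -, φ₁, hφ₁, ha⟩ := tendsto_subseq_of_bounded (Metric.isBounded_Icc 0 C)
        (x := fun k => ‖dualComponent (f (s k)) i‖) fun k => ⟨norm_nonneg _, hnorm _ _⟩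
      obtain ⟨φ₂, hφ₂, hces⟩ := h i (fun k => dualComponent (f (s (φ₁ k))) i)
        fun y => (hf _).comp (hs.comp hφ₁).tendsto_atTop
      exact ⟨φ₁ ∘ φ₂, hφ₁.comp hφ₂, fun ψ hψ =>
        ⟨⟨a, ha.comp (hφ₂.comp hψ).tendsto_atTop⟩, hces ψ hψ⟩⟩)
    fun i s K ⟨⟨a, ha⟩, hces⟩ => ⟨⟨a, (tendsto_add_atTop_iff_nat K).1 ha⟩, .of_add K hces⟩
  have hzero : ∀ i ∉ J, ∀ n, dualComponent (f n) i = 0 := fun i hi n => by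
    by_contra hne
    exact hi (Set.mem_iUnion.2 ⟨n, hne⟩)
  refine ⟨d, hd, fun i => ?_, fun i ψ hψ => ?_⟩
  · by_cases hi : i ∈ J
    · exact (hdP ⟨i, hi⟩ id strictMono_id).1
    · exact ⟨0, by simp [hzero i hi]⟩
  · by_cases hi : i ∈ J
    · exact (hdP ⟨i, hi⟩ ψ hψ).2
    · simp only [hzero i hi]
      exact cesaroMackeyNull_zero

variable [Fact (1 ≤ q)]

theorem abs_apply_sub_restrictFinset_le (hpq : p.toReal.HolderConjugate q.toReal)
    (f : StrongDual ℝ (lp E p)) (x : lp E p) (s : Finset I) :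
    |f (x - restrictFinset s x)| ≤
      ‖dualComponentNorms hpq f - restrictFinset s (dualComponentNorms hpq f)‖ * ‖x‖ := by
  have hp : p ≠ ⊤ := (ENNReal.toReal_ne_zero.1 hpq.pos.ne').2
  have hsum : HasSum (fun i => dualComponent f i ((x - restrictFinset s x) i))
      (f (x - restrictFinset s x)) := (lp.hasSum_single hp _).mapL f
  set ν := dualComponentNorms hpq f
  rw [mul_comm]
  refine (hsum.norm_le_of_bounded (lp.summable_mul hpq (toNorm x) (ν - restrictFinset s ν)).hasSum
    fun i => ?_).trans ((lp.tsum_mul_le_mul_norm' hpq (toNorm x) _).trans_eq (by rw [norm_toNorm]))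
  rw [coeFn_sub_restrictFinset, coeFn_sub_restrictFinset]
  split_ifs
  · simp
  · rw [coeFn_dualComponentNorms, toNorm_coe, norm_norm, norm_norm, mul_comm]
    exact (dualComponent f i).le_opNorm _

theorem norm_dualComponent_cesaro_le (f : ℕ → StrongDual ℝ (lp E p)) (N : ℕ) (i : I) :
    ‖dualComponent ((N : ℝ)⁻¹ • ∑ k ∈ Finset.range N, f k) i‖ ≤
      (N : ℝ)⁻¹ * ∑ k ∈ Finset.range N, ‖dualComponent (f k) i‖ := by
  rw [dualComponent, ContinuousLinearMap.smul_comp, ContinuousLinearMap.finsetSum_comp]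
  rw [norm_smul, norm_inv, Real.norm_natCast]
  gcongr
  exact norm_sum_le _ _

theorem cesaroMackeyNull_comp_restrictFinset {f : ℕ → StrongDual ℝ (lp E p)}
    (hf : ∀ i, CesaroMackeyNull fun k => dualComponent (f k) i) (s : Finset I) :
    CesaroMackeyNull fun k => (f k).comp (restrictFinset s) := by
  have : (fun k => (f k).comp (restrictFinset s)) =
      ∑ i ∈ s, fun k => (dualComponent (f k) i).comp (lp.evalCLM ℝ E p i) := by
    ext k x
    simp [restrictFinset_apply]
    rfl
  rw [this]
  exact CesaroMackeyNull.finsetSum s fun i _ => (hf i).comp _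

theorem abs_cesaro_apply_sub_restrictFinset_le (hpq : p.toReal.HolderConjugate q.toReal)
    (f : ℕ → StrongDual ℝ (lp E p)) (N : ℕ) (α : ℓ^q(I, ℝ)) (s : Finset I) (x : lp E p) :
    |((N : ℝ)⁻¹ • ∑ k ∈ Finset.range N, f k) (x - restrictFinset s x)| ≤
      (‖(N : ℝ)⁻¹ • ∑ k ∈ Finset.range N, dualComponentNorms hpq (f k) - α‖ +
        ‖α - restrictFinset s α‖) * ‖x‖ := by
  refine (abs_apply_sub_restrictFinset_le hpq _ x s).trans <| mul_le_mul_of_nonneg_right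
    (norm_sub_restrictFinset_le_of_forall_norm_le s (fun i => ?_) α) (norm_nonneg x)
  rw [coeFn_dualComponentNorms, norm_norm, lp.coeFn_smul, lp.coeFn_sum, Pi.smul_apply,
    Finset.sum_apply, smul_eq_mul, Real.norm_eq_abs]
  simp only [coeFn_dualComponentNorms]
  exact (norm_dualComponent_cesaro_le f N i).trans (le_abs_self _)

theorem cesaroMackeyNull_of_dualComponent (hpq : p.toReal.HolderConjugate q.toReal)
    {f : ℕ → StrongDual ℝ (lp E p)} (hf : ∀ i, CesaroMackeyNull fun k => dualComponent (f k) i)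
    {α : ℓ^q(I, ℝ)} (hα : Tendsto (fun N : ℕ =>
      (N : ℝ)⁻¹ • ∑ k ∈ Finset.range N, dualComponentNorms hpq (f k)) atTop (𝓝 α)) :
    CesaroMackeyNull f := by
  intro W hW
  obtain ⟨M, hM⟩ := hW.exists_norm_le
  rw [Metric.tendstoUniformlyOn_iff]
  intro ε hε
  set η := ε / 2 / (max M 0 + 1)
  have hη : 0 < η := by positivity
  have hηM : ∀ x ∈ W, η * ‖x‖ ≤ ε / 2 := fun x hx =>
    calc η * ‖x‖ ≤ η * (max M 0 + 1) := by gcongr; linarith [hM x hx, le_max_left M 0]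
      _ = ε / 2 := div_mul_cancel₀ _ (by positivity)
  obtain ⟨s, hs⟩ := (Metric.tendsto_nhds.1 (tendsto_restrictFinset
    (ENNReal.toReal_ne_zero.1 hpq.symm.pos.ne').2 α) _ (half_pos hη)).exists
  filter_upwards [Metric.tendstoUniformlyOn_iff.1
    (cesaroMackeyNull_comp_restrictFinset hf s W hW) _ (half_pos hε),
    Metric.tendsto_nhds.1 hα _ (half_pos hη)] with N hhead hβ x hx
  rw [dist_eq_norm] at hβ
  rw [dist_eq_norm'] at hs
  specialize hhead x hx
  rw [Pi.zero_apply, dist_zero_left] at hhead ⊢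
  calc ‖(N : ℝ)⁻¹ • ∑ k ∈ Finset.range N, f k x‖
      = ‖(N : ℝ)⁻¹ • ∑ k ∈ Finset.range N, (f k).comp (restrictFinset s) x +
          ((N : ℝ)⁻¹ • ∑ k ∈ Finset.range N, f k) (x - restrictFinset s x)‖ := by
        simp [map_sub]
    _ ≤ _ := norm_add_le _ _
    _ < ε / 2 + ε / 2 := by
        refine add_lt_add_of_lt_of_le hhead ?_
        rw [Real.norm_eq_abs]
        refine (abs_cesaro_apply_sub_restrictFinset_le hpq f N α s x).trans ?_
        exact (mul_le_mul_of_nonneg_right (by linarith) (norm_nonneg x)).trans (hηM x hx)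
    _ = ε := add_halves ε

end Dual

end lp

/-- The `ℓᵖ`-sum, `1 < p < ∞`, of any family of Banach spaces with property (μ^s) has
property (μ^s). -/
theorem stmt13 {I : Type} {E : I → Type} [∀ i, NormedAddCommGroup (E i)]
    [∀ i, NormedSpace ℝ (E i)] [∀ i, CompleteSpace (E i)]
    (p : ℝ≥0∞) [Fact (1 ≤ p)] (hp1 : 1 < p) (hpt : p < ⊤)
    (h : ∀ i, PropMuS (E i)) : PropMuS (lp E p) := by
  classical
  have hp : 1 < p.toReal := by
    simpa using (ENNReal.toReal_lt_toReal ENNReal.one_ne_top hpt.ne).2 hp1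
  have hconj := Real.HolderConjugate.conjExponent hp
  set q := ENNReal.ofReal p.toReal.conjExponent
  have hpq : p.toReal.HolderConjugate q.toReal := by
    rwa [ENNReal.toReal_ofReal hconj.symm.nonneg]
  have : Fact (1 ≤ q) := ⟨ENNReal.one_le_ofReal.2 hconj.symm.lt.le⟩
  intro f hf
  obtain ⟨C, hC⟩ := hf.exists_norm_le
  obtain ⟨d, hd, hconv, hces⟩ := lp.exists_subseq_dualComponent hpq h hf hC
  choose a ha using hconv
  set ν : ℕ → ℓ^q(I, ℝ) := fun k => lp.dualComponentNorms hpq (f (d k))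
  have hν : ∀ k, ‖ν k‖ ≤ C := fun k => (lp.norm_dualComponentNorms_le hpq _).trans (hC _)
  have ha_mem : Memℓp a q := lp.memℓp_of_tendsto
    (isBounded_iff_forall_norm_le.2 ⟨C, Set.forall_mem_range.2 hν⟩) (tendsto_pi_nhds.2 ha)
  obtain ⟨χ, hχ, hcesaro⟩ := lp.exists_subseq_forall_tendsto_cesaro hpq.symm.lt hν
    (α := ⟨a, ha_mem⟩) ha
  exact ⟨d ∘ χ, hd.comp hχ, fun ψ hψ =>
    lp.cesaroMackeyNull_of_dualComponent hpq (fun i => hces i _ (hχ.comp hψ)) (hcesaro ψ hψ)⟩
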